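/- arXiv:math/0311426 — 2 statements merged into one kernel-verified Lean document; each statement's English description precedes it below -/
import Mathlib

section
/- For every n ≥ 1, the n-th Bernoulli number b_n equals ∑_{r=1}^{n} (−1)^r · n! · ∑_{(n_1,…,n_r): n_i ≥ 1, n_1+⋯+n_r = n} 1/((n_1+1)!·(n_2+1)!⋯(n_r+1)!). -/
/-!
The exponential generating function of the Bernoulli numbers is `X / (e^X - 1) = 1 / (1 + φ)`
with `φ = ∑_{k ≥ 1} X^k / (k+1)!`. Expanding `1 / (1 + φ)` as the geometric series `∑_r (-φ)^r`,
only the terms with `r ≤ n` reach degree `n` because `φ` has no constant term, and the coefficient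
of `X^n` in `φ^r` is the sum, over the compositions `(n_1, …, n_r)` of `n`, of `∏ 1/(n_i+1)!`.
-/

open PowerSeries Finset

namespace PowerSeries

variable {R : Type*}

theorem coeff_pow_eq_sum_antidiagonalTuple [CommSemiring R] (φ : R⟦X⟧) (r n : ℕ) :
    coeff n (φ ^ r) = ∑ c ∈ Nat.antidiagonalTuple r n, ∏ i, coeff (c i) φ := by
  rw [← Fin.prod_const, coeff_prod, ← piAntidiag_univ_fin_eq_antidiagonalTuple, finsuppAntidiag,
    sum_map, ← sum_attach (piAntidiag _ _)]
  rfl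

theorem coeff_pow_eq_sum_compositions [CommSemiring R] {φ : R⟦X⟧} (hφ : constantCoeff φ = 0)
    (r n : ℕ) :
    coeff n (φ ^ r) = ∑ c ∈ (Nat.antidiagonalTuple r n).filter (fun c => ∀ i, 1 ≤ c i),
      ∏ i, coeff (c i) φ := by
  rw [coeff_pow_eq_sum_antidiagonalTuple, sum_filter_of_ne]
  intro c _ hprod i
  by_contra hci
  exact hprod (prod_eq_zero (mem_univ i) (by simp [Nat.lt_one_iff.mp (not_le.mp hci), hφ]))

theorem coeff_eq_sum_range_of_mul_one_add_eq_one [CommRing R] {ψ φ : R⟦X⟧}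
    (hφ : constantCoeff φ = 0) (hψ : ψ * (1 + φ) = 1) (n : ℕ) :
    coeff n ψ = ∑ r ∈ range (n + 1), (-1) ^ r * coeff n (φ ^ r) := by
  set S := ∑ r ∈ range (n + 1), (-φ) ^ r
  have hS : S = ψ - ψ * (-φ) ^ (n + 1) :=
    calc S = S * (ψ * (1 + φ)) := by rw [hψ, mul_one]
      _ = ψ * (1 - (-φ) ^ (n + 1)) := by rw [← geom_sum_mul_neg]; ring
      _ = ψ - ψ * (-φ) ^ (n + 1) := by ring
  have htail : coeff n (ψ * (-φ) ^ (n + 1)) = 0 := by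
    have hX : X ∣ -φ := X_dvd_iff.mpr (by simp [hφ])
    exact X_pow_dvd_iff.mp ((pow_dvd_pow_of_dvd hX _).mul_left ψ) n n.lt_succ_self
  rw [← sub_zero (coeff n ψ), ← htail, ← map_sub, ← hS, map_sum]
  refine sum_congr rfl fun r _ => ?_
  rw [neg_pow φ, ← map_one (C (R := R)), ← map_neg, ← map_pow, coeff_C_mul]

end PowerSeries

noncomputable def expSubOneDivX : ℚ⟦X⟧ := mk fun k => 1 / (k + 1).factorial

theorem X_mul_expSubOneDivX : X * expSubOneDivX = exp ℚ - 1 := by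
  ext (_ | k) <;> simp [expSubOneDivX, coeff_succ_X_mul, coeff_one]

theorem bernoulliPowerSeries_mul_expSubOneDivX : bernoulliPowerSeries ℚ * expSubOneDivX = 1 := by
  refine mul_left_cancel₀ (X_ne_zero (R := ℚ)) ?_
  rw [mul_one, mul_left_comm, X_mul_expSubOneDivX, bernoulliPowerSeries_mul_exp_sub_one]

theorem coeff_expSubOneDivX_sub_one {k : ℕ} (hk : 1 ≤ k) :
    coeff k (expSubOneDivX - 1) = (1 : ℚ) / (k + 1).factorial := by
  simp [expSubOneDivX, coeff_one, Nat.one_le_iff_ne_zero.mp hk]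

/-- For `n ≥ 1`, `b_n = ∑_{r=1}^n (-1)^r · n! · ∑_{compositions of n into r parts} ∏ 1/(n_i+1)!`. -/
theorem stmt_4 (n : ℕ) (hn : 1 ≤ n) :
    bernoulli n = ∑ r ∈ Finset.Icc 1 n, (-1 : ℚ) ^ r * (n.factorial : ℚ) *
      ∑ c ∈ (Finset.Nat.antidiagonalTuple r n).filter (fun c => ∀ i, 1 ≤ c i),
        ∏ i, (1 : ℚ) / ((c i + 1).factorial : ℚ) := by
  have hφ : constantCoeff (expSubOneDivX - 1) = 0 := by simp [expSubOneDivX]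
  have hψ : bernoulliPowerSeries ℚ * (1 + (expSubOneDivX - 1)) = 1 := by
    rw [add_sub_cancel, bernoulliPowerSeries_mul_expSubOneDivX]
  have hB : bernoulli n = n.factorial * coeff n (bernoulliPowerSeries ℚ) := by
    simp [bernoulliPowerSeries, mul_div_cancel₀, n.factorial_ne_zero]
  rw [hB, coeff_eq_sum_range_of_mul_one_add_eq_one hφ hψ, range_eq_Ico,
    sum_eq_sum_Ico_succ_bot n.succ_pos, pow_zero, pow_zero, one_mul, coeff_one, if_neg (by omega),
    zero_add, zero_add, Nat.succ_eq_add_one, Ico_add_one_right_eq_Icc, mul_sum]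
  refine sum_congr rfl fun r _ => ?_
  rw [coeff_pow_eq_sum_compositions hφ]
  have hterms : ∀ c ∈ (Nat.antidiagonalTuple r n).filter (fun c => ∀ i, 1 ≤ c i),
      ∏ i, coeff (c i) (expSubOneDivX - 1) = ∏ i, (1 : ℚ) / (c i + 1).factorial := fun c hc =>
    prod_congr rfl fun i _ => coeff_expSubOneDivX_sub_one ((mem_filter.mp hc).2 i)
  rw [sum_congr rfl hterms]
  ring
end

section
/- Let P be a finite poset and let Ω(P; t) be its order polynomial. Then for all s, t, Ω(P; s+t) = ∑_{I ideal of P} Ω(I; s)·Ω(P∖I; t), where the sum runs over all order ideals I of P (including ∅ and P), and P∖I carries the induced order. -/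
/-!
Identify `Fin (n + m)` with the ordinal sum `Fin n ⊕ₗ Fin m`. A monotone map `P → Fin n ⊕ₗ Fin m`
is the same thing as the lower set `I` of points sent to the left summand together with monotone
maps `I → Fin n` and `P ∖ I → Fin m`, so counting proves the identity at all positive integers
`s = n`, `t = m`. Both sides are polynomial in each variable separately, and agreement at
infinitely many integers extends it first to all `s` and then to all `t`.
-/

open scoped Classical

open Finset Polynomial

namespace Polynomial

variable {R : Type*} [CommRing R] [IsDomain R] [CharZero R]

theorem eq_of_eval_natCast_eq {p q : R[X]}
    (h : ∀ n : ℕ, 1 ≤ n → p.eval (n : R) = q.eval (n : R)) : p = q :=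
  eq_of_infinite_eval_eq p q <|
    Set.infinite_of_injective_forall_mem (f := fun k : ℕ => ((k + 1 : ℕ) : R))
      (fun a b hab => by simpa using hab) (fun k => h (k + 1) (by omega))

theorem eval_add_eq_sum_of_natCast {ι : Type*} (s : Finset ι) (p : R[X]) (q r : ι → R[X])
    (h : ∀ n m : ℕ, 1 ≤ n → 1 ≤ m →
      p.eval ((n : R) + m) = ∑ i ∈ s, (q i).eval (n : R) * (r i).eval (m : R))
    (x y : R) : p.eval (x + y) = ∑ i ∈ s, (q i).eval x * (r i).eval y := by
  have h_left : ∀ m : ℕ, 1 ≤ m → ∀ x : R,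
      p.eval (x + m) = ∑ i ∈ s, (q i).eval x * (r i).eval (m : R) := by
    intro m hm x
    have hpoly : p.comp (X + C (m : R)) = ∑ i ∈ s, q i * C ((r i).eval (m : R)) :=
      eq_of_eval_natCast_eq fun n hn => by simpa [eval_finsetSum] using h n m hn hm
    simpa [eval_finsetSum] using congrArg (eval x) hpoly
  have hpoly : p.comp (C x + X) = ∑ i ∈ s, C ((q i).eval x) * r i :=
    eq_of_eval_natCast_eq fun m hm => by simpa [eval_finsetSum] using h_left m hm x
  simpa [eval_finsetSum] using congrArg (eval y) hpoly

end Polynomial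

namespace Sum

variable {α β : Type*} [Preorder α] [Preorder β]

theorem getLeft_le_getLeft_of_toLex_le {a b : α ⊕ β} (hab : toLex a ≤ toLex b) (ha : a.isLeft)
    (hb : b.isLeft) : a.getLeft ha ≤ b.getLeft hb := by
  obtain ⟨x, rfl⟩ := isLeft_iff.1 ha
  obtain ⟨y, rfl⟩ := isLeft_iff.1 hb
  simpa using hab

theorem getRight_le_getRight_of_toLex_le {a b : α ⊕ β} (hab : toLex a ≤ toLex b)
    (ha : a.isRight) (hb : b.isRight) : a.getRight ha ≤ b.getRight hb := by
  obtain ⟨x, rfl⟩ := isRight_iff.1 ha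
  obtain ⟨y, rfl⟩ := isRight_iff.1 hb
  simpa using hab

end Sum

section LexSum

variable {P α β : Type*} [Fintype P]

noncomputable def leftPart (f : P → α ⊕ₗ β) : Finset P :=
  univ.filter fun p => (ofLex (f p)).isLeft

@[simp]
theorem mem_leftPart {f : P → α ⊕ₗ β} {p : P} : p ∈ leftPart f ↔ (ofLex (f p)).isLeft := by
  simp [leftPart]

noncomputable def glue (I : Finset P) (g : I → α) (h : ↥Iᶜ → β) (p : P) : α ⊕ₗ β :=
  if hp : p ∈ I then toLex (Sum.inl (g ⟨p, hp⟩)) else toLex (Sum.inr (h ⟨p, mem_compl.2 hp⟩))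

theorem leftPart_glue (I : Finset P) (g : I → α) (h : ↥Iᶜ → β) : leftPart (glue I g h) = I := by
  ext p
  by_cases hp : p ∈ I <;> simp [glue, hp]

variable [Preorder P] [Preorder α] [Preorder β]

theorem isLowerSet_leftPart {f : P → α ⊕ₗ β} (hf : Monotone f) :
    IsLowerSet (leftPart f : Set P) := by
  intro a b hba ha
  rw [mem_coe, mem_leftPart] at ha ⊢
  obtain ⟨x, hx⟩ := Sum.isLeft_iff.1 ha
  have hle := Sum.Lex.le_def.1 (hf hba)
  rcases hfb : ofLex (f b) with y | y
  · rfl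
  · rw [hx, hfb] at hle
    exact absurd hle Sum.lex_inr_inl

theorem monotone_glue {I : Finset P} (hI : IsLowerSet (I : Set P)) {g : I → α} {h : ↥Iᶜ → β}
    (hg : Monotone g) (hh : Monotone h) : Monotone (glue I g h) := by
  intro a b hab
  by_cases ha : a ∈ I <;> by_cases hb : b ∈ I
  · simpa [glue, ha, hb] using hg (show (⟨a, ha⟩ : I) ≤ ⟨b, hb⟩ from hab)
  · simp [glue, ha, hb]
  · exact absurd (hI hab hb) ha
  · simpa [glue, ha, hb] using
      hh (show (⟨a, mem_compl.2 ha⟩ : ↥Iᶜ) ≤ ⟨b, mem_compl.2 hb⟩ from hab)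

noncomputable def monotoneLeftPartEquiv (I : Finset P) (hI : IsLowerSet (I : Set P)) :
    {f : {f : P → α ⊕ₗ β // Monotone f} // leftPart f.1 = I} ≃
      {g : I → α // Monotone g} × {h : ↥Iᶜ → β // Monotone h} where
  toFun f :=
    have hmem : ∀ p : I, p.1 ∈ leftPart f.1.1 := fun p => by rw [f.2]; exact p.2
    have hnotMem : ∀ p : ↥Iᶜ, p.1 ∉ leftPart f.1.1 := fun p => by
      rw [f.2]; exact mem_compl.1 p.2
    (⟨fun p => (ofLex (f.1.1 p)).getLeft (mem_leftPart.1 (hmem p)),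
      fun _ _ hpq => Sum.getLeft_le_getLeft_of_toLex_le (f.1.2 hpq) _ _⟩,
     ⟨fun p => (ofLex (f.1.1 p)).getRight (Sum.not_isLeft.1 (mt mem_leftPart.2 (hnotMem p))),
      fun _ _ hpq => Sum.getRight_le_getRight_of_toLex_le (f.1.2 hpq) _ _⟩)
  invFun gh := ⟨⟨glue I gh.1.1 gh.2.1, monotone_glue hI gh.1.2 gh.2.2⟩, leftPart_glue I _ _⟩
  left_inv f := by
    obtain ⟨⟨f, _⟩, rfl⟩ := f
    ext p
    by_cases hp : p ∈ leftPart f <;> simp [glue, hp]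
  right_inv gh := by
    ext p
    · simp [glue, p.2]
    · simp [glue, mem_compl.1 p.2]

noncomputable def monotoneLexSumEquiv :
    {f : P → α ⊕ₗ β // Monotone f} ≃
      Σ I : {I : Finset P // IsLowerSet (I : Set P)},
        {g : I.1 → α // Monotone g} × {h : ↥I.1ᶜ → β // Monotone h} :=
  (Equiv.sigmaFiberEquiv fun f : {f : P → α ⊕ₗ β // Monotone f} =>
      (⟨leftPart f.1, isLowerSet_leftPart f.2⟩ :
        {I : Finset P // IsLowerSet (I : Set P)})).symm.trans
    (Equiv.sigmaCongrRight fun I =>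
      (Equiv.subtypeEquivRight fun _ => Subtype.ext_iff).trans (monotoneLeftPartEquiv I.1 I.2))

theorem card_monotone_lexSum [Finite α] [Finite β] :
    Nat.card {f : P → α ⊕ₗ β // Monotone f} =
      ∑ I ∈ univ.filter (fun I : Finset P => IsLowerSet (I : Set P)),
        Nat.card {g : I → α // Monotone g} * Nat.card {h : ↥Iᶜ → β // Monotone h} := by
  rw [Nat.card_congr monotoneLexSumEquiv, Nat.card_sigma]
  simp only [Nat.card_prod]
  exact (sum_subtype (univ.filter _) (by simp) (fun I : Finset P =>
    Nat.card {g : I → α // Monotone g} * Nat.card {h : ↥Iᶜ → β // Monotone h})).symm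

end LexSum

def OrderIso.monotoneArrowCongr {P Q α β : Type*} [Preorder P] [Preorder Q] [Preorder α]
    [Preorder β] (e : P ≃o Q) (e' : α ≃o β) :
    {f : P → α // Monotone f} ≃ {f : Q → β // Monotone f} :=
  (e.toEquiv.arrowCongr e'.toEquiv).subtypeEquiv fun f =>
    ⟨fun hf => e'.monotone.comp (hf.comp e.symm.monotone),
      fun hf => by simpa [Function.comp_def] using e'.symm.monotone.comp (hf.comp e.monotone)⟩

def Finset.univOrderIso (P : Type*) [Fintype P] [Preorder P] : (univ : Finset P) ≃o P :=
  { Equiv.subtypeUnivEquiv mem_univ with map_rel_iff' := Iff.rfl }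

theorem card_monotone_fin_add {P : Type*} [Fintype P] [Preorder P] (n m : ℕ) :
    Nat.card {f : P → Fin (n + m) // Monotone f} =
      ∑ I ∈ univ.filter (fun I : Finset P => IsLowerSet (I : Set P)),
        Nat.card {g : I → Fin n // Monotone g} * Nat.card {h : ↥Iᶜ → Fin m // Monotone h} := by
  rw [← card_monotone_lexSum]
  exact Nat.card_congr <| (OrderIso.refl P).monotoneArrowCongr <|
    Fintype.orderIsoFinOfCardEq (Fin n ⊕ₗ Fin m) (by simp [Fintype.card_lex])

/-- Let `P` be a finite poset and for each subset `T ⊆ P` let `Ω T` be the order polynomial of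
the induced sub-poset on `T` (its value at each positive integer `n` counts order-preserving
maps `T → [n]`). Then for all `s, t`,
`Ω(P; s+t) = ∑_{I ideal of P} Ω(I; s) · Ω(P∖I; t)`, summing over all order ideals `I`. -/
theorem stmt_11 {P : Type*} [Fintype P] [PartialOrder P]
    (Ω : Finset P → Polynomial ℚ)
    (hΩ : ∀ (T : Finset P) (n : ℕ), 1 ≤ n →
      (Ω T).eval (n : ℚ) = (Nat.card {f : {x : P // x ∈ T} → Fin n // Monotone f} : ℚ)) :
    ∀ s t : ℚ,
      (Ω Finset.univ).eval (s + t)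
        = ∑ I ∈ Finset.univ.filter
            (fun I : Finset P => ∀ x ∈ I, ∀ y : P, y ≤ x → y ∈ I),
          (Ω I).eval s * (Ω Iᶜ).eval t := by
  have hideal : univ.filter (fun I : Finset P => ∀ x ∈ I, ∀ y : P, y ≤ x → y ∈ I) =
      univ.filter fun I : Finset P => IsLowerSet (I : Set P) :=
    filter_congr fun I _ => ⟨fun h _ _ hba ha => h _ ha _ hba, fun h _ ha _ hba => h hba ha⟩
  refine eval_add_eq_sum_of_natCast _ _ _ _ fun n m hn hm => ?_
  rw [← Nat.cast_add, hΩ _ _ (by omega),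
    Nat.card_congr ((univOrderIso P).monotoneArrowCongr (.refl _)), card_monotone_fin_add, hideal]
  push_cast
  exact sum_congr rfl fun I _ => by rw [hΩ I n hn, hΩ Iᶜ m hm]
end
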